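/- arXiv:2311.09454 — 2 statements merged into one kernel-verified Lean document; each statement's English description precedes it below -/
import Mathlib

section
/- Let k ≥ 2, let S = S^{k−1} be the unit sphere of ℝ^k, and let ν be a probability measure on ℝ^k with ∫‖y‖² ν(dy) < ∞. Define m(V) = ∫⟨y, V⟩ ν(dy) and the tangent covariance kernel Σ(U, V) = ∫(⟨y, U⟩ − m(U))·(⟨y, V⟩ − m(V)) ν(dy) for U, V ∈ S. Let G : Ω × S → ℝ be a Gaussian tangent field with covariance Σ, i.e. a stochastic process such that for every finite tuple V₁, …, V_m ∈ S the random vector (G(V₁), …, G(V_m)) is centered multivariate Gaussian with covariance matrix (Σ(V_i, V_j))_{i,j}. Then there exists a version of G which, almost surely, is γ-Hölder continuous on S for every Hölder exponent γ ∈ (0, 1). -/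
open MeasureTheory ProbabilityTheory Metric Filter
open scoped RealInnerProductSpace NNReal ENNReal

/-- The tangent mean function `m(V) = ∫ ⟪y, V⟫ ν(dy)` of a measure `ν` on `ℝ^k`. -/
noncomputable def tangentMean {k : ℕ} (ν : Measure (EuclideanSpace ℝ (Fin k)))
    (V : EuclideanSpace ℝ (Fin k)) : ℝ :=
  ∫ y, ⟪y, V⟫ ∂ν

/-- The tangent covariance kernel
`Σ(U,V) = ∫ (⟪y,U⟫ - m(U))·(⟪y,V⟫ - m(V)) ν(dy)` of a measure `ν` on `ℝ^k`. -/
noncomputable def tangentCovKernel {k : ℕ} (ν : Measure (EuclideanSpace ℝ (Fin k)))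
    (U V : EuclideanSpace ℝ (Fin k)) : ℝ :=
  ∫ y, (⟪y, U⟫ - tangentMean ν U) * (⟪y, V⟫ - tangentMean ν V) ∂ν

/-- A stochastic process `G : Ω × S → ℝ` is a Gaussian tangent field with covariance
kernel `Sig` if all its finite-dimensional marginals are centered multivariate Gaussian
with covariance matrix `(Sig(Vᵢ, Vⱼ))`; equivalently (Cramér–Wold), every finite linear
combination `∑ cᵢ G(Vᵢ)` is a centered real Gaussian with variance `∑ᵢⱼ cᵢ cⱼ Sig(Vᵢ,Vⱼ)`. -/
def IsGaussianTangentField {Ω S : Type*} [MeasurableSpace Ω] (P : Measure Ω)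
    (G : Ω → S → ℝ) (Sig : S → S → ℝ) : Prop :=
  ∀ (m : ℕ) (V : Fin m → S) (c : Fin m → ℝ),
    Measure.map (fun ω => ∑ i, c i * G ω (V i)) P
      = gaussianReal 0 (∑ i, ∑ j, c i * c j * Sig (V i) (V j)).toNNReal

/-!
The kernel `Σ` is the covariance of the linear functionals `y ↦ ⟪y, V⟫` under `ν`, so its
quadratic form `∑ cᵢ cⱼ Σ(Vᵢ, Vⱼ)` vanishes whenever `∑ cᵢ Vᵢ = 0`. The centered Gaussian
`∑ cᵢ G(Vᵢ)` then has variance zero and vanishes almost surely; in particular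
`G(V) = ∑ᵢ Vᵢ G(eᵢ)` almost surely for each `V`. The version `V ↦ ∑ᵢ Vᵢ G(eᵢ)` is linear in `V`,
hence Lipschitz, hence `γ`-Hölder on the bounded sphere for every `γ ≤ 1`.
-/

section TangentCovariance

variable {k : ℕ} {ν : Measure (EuclideanSpace ℝ (Fin k))}

lemma tangentMean_eq_inner_integral (h : Integrable id ν) (V : EuclideanSpace ℝ (Fin k)) :
    tangentMean ν V = ⟪∫ y, y ∂ν, V⟫ := by
  simpa [tangentMean, real_inner_comm] using integral_inner h V

lemma sum_mul_tangentCovKernel_eq_zero [IsFiniteMeasure ν] (hν : MemLp id 2 ν)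
    {ι : Type*} [Fintype ι] (U : EuclideanSpace ℝ (Fin k)) (V : ι → EuclideanSpace ℝ (Fin k))
    (c : ι → ℝ) (h : ∑ j, c j • V j = 0) :
    ∑ j, c j * tangentCovKernel ν U (V j) = 0 := by
  have hint : Integrable id ν := hν.integrable one_le_two
  set f : EuclideanSpace ℝ (Fin k) → EuclideanSpace ℝ (Fin k) → ℝ :=
    fun W y => ⟪y, W⟫ - tangentMean ν W
  have hf : ∀ W, MemLp (f W) 2 ν := fun W => (hν.inner_const W).sub (memLp_const _)
  have hcentered : ∀ W y, f W y = ⟪y - ∫ z, z ∂ν, W⟫ := fun W y => by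
    simp only [f, tangentMean_eq_inner_integral hint, inner_sub_left]
  have hcomb : ∀ y, ∑ j, c j * f (V j) y = 0 := fun y => by
    simp only [hcentered, ← real_inner_smul_right, ← inner_sum, h, inner_zero_right]
  calc ∑ j, c j * tangentCovKernel ν U (V j)
      = ∫ y, ∑ j, c j * (f U y * f (V j) y) ∂ν := by
        rw [integral_finsetSum (f := fun j y => c j * (f U y * f (V j) y)) _
          fun j _ => ((hf U).integrable_mul (hf (V j))).const_mul (c j)]
        simp only [integral_const_mul, tangentCovKernel, f]
    _ = 0 := by
        simp only [mul_left_comm _ (f U _), ← Finset.mul_sum, hcomb, mul_zero, integral_zero]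

lemma sum_sum_mul_tangentCovKernel_eq_zero [IsFiniteMeasure ν] (hν : MemLp id 2 ν)
    {ι : Type*} [Fintype ι] (V : ι → EuclideanSpace ℝ (Fin k)) (c : ι → ℝ)
    (h : ∑ j, c j • V j = 0) :
    ∑ i, ∑ j, c i * c j * tangentCovKernel ν (V i) (V j) = 0 := by
  simp only [mul_assoc, ← Finset.mul_sum, sum_mul_tangentCovKernel_eq_zero hν _ V c h, mul_zero,
    Finset.sum_const_zero]

end TangentCovariance

lemma ae_eq_of_map_eq_dirac {α β : Type*} [MeasurableSpace α] [MeasurableSpace β]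
    [MeasurableSingletonClass β] {μ : Measure α} {f : α → β} {b : β}
    (h : μ.map f = Measure.dirac b) : ∀ᵐ x ∂μ, f x = b := by
  have hf : AEMeasurable f μ := .of_map_ne_zero (h ▸ (NeZero.ne _))
  exact ae_of_ae_map hf (h ▸ (ae_dirac_iff (measurableSet_singleton b)).2 rfl)

lemma IsGaussianTangentField.ae_sum_eq_zero {Ω S : Type*} [MeasurableSpace Ω] {P : Measure Ω}
    {G : Ω → S → ℝ} {Sig : S → S → ℝ} (hG : IsGaussianTangentField P G Sig) {m : ℕ}
    (V : Fin m → S) (c : Fin m → ℝ) (h : ∑ i, ∑ j, c i * c j * Sig (V i) (V j) = 0) :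
    ∀ᵐ ω ∂P, ∑ i, c i * G ω (V i) = 0 := by
  have hmap := hG m V c
  rw [h, Real.toNNReal_zero, gaussianReal_zero_var] at hmap
  exact ae_eq_of_map_eq_dirac hmap

noncomputable def sphereSingle {k : ℕ} (i : Fin k) : sphere (0 : EuclideanSpace ℝ (Fin k)) 1 :=
  ⟨EuclideanSpace.single i 1, by simp⟩

lemma sum_smul_sphereSingle {k : ℕ} (V : EuclideanSpace ℝ (Fin k)) :
    ∑ i, V i • (sphereSingle i : EuclideanSpace ℝ (Fin k)) = V := by
  simpa [sphereSingle] using (EuclideanSpace.basisFun (Fin k) ℝ).sum_repr V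

lemma inner_toLp_eq_sum {k : ℕ} (a : Fin k → ℝ) (V : EuclideanSpace ℝ (Fin k)) :
    ⟪WithLp.toLp 2 a, V⟫ = ∑ i, V i * a i := by
  simp [PiLp.inner_apply]

lemma edist_sphere_le_two {E : Type*} [SeminormedAddCommGroup E] (U V : sphere (0 : E) 1) :
    edist U V ≤ 2 := by
  calc edist U V ≤ edist (U : E) 0 + edist (0 : E) V := edist_triangle _ _ _
    _ = 2 := by norm_num [edist_dist]

lemma IsGaussianTangentField.ae_eq_sum_sphereSingle {k : ℕ}
    {ν : Measure (EuclideanSpace ℝ (Fin k))} [IsFiniteMeasure ν] (hν : MemLp id 2 ν)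
    {Ω : Type*} [MeasurableSpace Ω] {P : Measure Ω}
    {G : Ω → sphere (0 : EuclideanSpace ℝ (Fin k)) 1 → ℝ}
    (hG : IsGaussianTangentField P G (fun U V => tangentCovKernel ν U V))
    (V : sphere (0 : EuclideanSpace ℝ (Fin k)) 1) :
    ∀ᵐ ω ∂P, G ω V = ∑ i, (V : EuclideanSpace ℝ (Fin k)) i * G ω (sphereSingle i) := by
  let W : Fin (k + 1) → sphere (0 : EuclideanSpace ℝ (Fin k)) 1 := Fin.cons V sphereSingle
  let c : Fin (k + 1) → ℝ := Fin.cons 1 fun i => -(V : EuclideanSpace ℝ (Fin k)) i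
  have hrel : ∑ j, c j • (W j : EuclideanSpace ℝ (Fin k)) = 0 := by
    simp [W, c, Fin.sum_univ_succ, neg_smul, Finset.sum_neg_distrib, sum_smul_sphereSingle]
  filter_upwards [hG.ae_sum_eq_zero W c (sum_sum_mul_tangentCovKernel_eq_zero hν _ c hrel)]
    with ω hω
  simp only [W, c, Fin.sum_univ_succ, Fin.cons_zero, Fin.cons_succ, one_mul, neg_mul,
    Finset.sum_neg_distrib] at hω
  linarith

theorem gaussianTangentField_holder_version_general
    (k : ℕ)
    (ν : Measure (EuclideanSpace ℝ (Fin k))) [IsProbabilityMeasure ν]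
    (hν : Integrable (fun y => ‖y‖ ^ 2) ν)
    {Ω : Type*} [MeasurableSpace Ω] (P : Measure Ω)
    (G : Ω → sphere (0 : EuclideanSpace ℝ (Fin k)) 1 → ℝ)
    (hG : IsGaussianTangentField P G
      (fun U V => tangentCovKernel ν (U : EuclideanSpace ℝ (Fin k)) (V : EuclideanSpace ℝ (Fin k)))) :
    ∃ Ghat : Ω → sphere (0 : EuclideanSpace ℝ (Fin k)) 1 → ℝ,
      (∀ V, ∀ᵐ ω ∂P, G ω V = Ghat ω V) ∧
      (∀ᵐ ω ∂P, ∀ γ : ℝ≥0, 0 < γ → (γ : ℝ) < 1 →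
        ∃ C : ℝ≥0, HolderWith C γ (Ghat ω)) := by
  have hν2 : MemLp id 2 ν := (memLp_two_iff_integrable_sq_norm aestronglyMeasurable_id).2 hν
  let a : Ω → EuclideanSpace ℝ (Fin k) := fun ω => WithLp.toLp 2 fun i => G ω (sphereSingle i)
  refine ⟨fun ω V => ⟪a ω, V⟫, fun V => ?_, ae_of_all _ fun ω γ _ hγ1 => ?_⟩
  · simpa only [a, inner_toLp_eq_sum] using hG.ae_eq_sum_sphereSingle hν2 V
  · have hlip : LipschitzWith _ fun V : sphere (0 : EuclideanSpace ℝ (Fin k)) 1 => ⟪a ω, V⟫ :=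
      (innerSL ℝ (a ω)).lipschitz.comp (LipschitzWith.subtype_val _)
    exact ⟨_, (holderWith_one.2 hlip).of_le edist_sphere_le_two (by exact_mod_cast hγ1.le)⟩

/-- A Gaussian tangent field on the unit sphere `S^{k-1}` whose covariance is the tangent
covariance kernel of a measure `ν` on `ℝ^k` with finite second moment admits a version
that is almost surely `γ`-Hölder continuous for every Hölder exponent `γ ∈ (0,1)`. -/
theorem gaussianTangentField_holder_version
    (k : ℕ) (hk : 2 ≤ k)
    (ν : Measure (EuclideanSpace ℝ (Fin k))) [IsProbabilityMeasure ν]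
    (hν : Integrable (fun y => ‖y‖ ^ 2) ν)
    {Ω : Type*} [MeasurableSpace Ω] (P : Measure Ω) [IsProbabilityMeasure P]
    (G : Ω → sphere (0 : EuclideanSpace ℝ (Fin k)) 1 → ℝ)
    (hGmeas : Measurable fun q : Ω × sphere (0 : EuclideanSpace ℝ (Fin k)) 1 => G q.1 q.2)
    (hG : IsGaussianTangentField P G
      (fun U V => tangentCovKernel ν (U : EuclideanSpace ℝ (Fin k)) (V : EuclideanSpace ℝ (Fin k)))) :
    ∃ Ghat : Ω → sphere (0 : EuclideanSpace ℝ (Fin k)) 1 → ℝ,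
      (∀ V, ∀ᵐ ω ∂P, G ω V = Ghat ω V) ∧
      (∀ᵐ ω ∂P, ∀ γ : ℝ≥0, 0 < γ → (γ : ℝ) < 1 →
        ∃ C : ℝ≥0, HolderWith C γ (Ghat ω)) :=
  gaussianTangentField_holder_version_general k ν hν P G hG
end

section
/- Let k ≥ 2, let S = S^{k−1} be the unit sphere of ℝ^k, let x₁, x₂, … be i.i.d. ℝ^k-valued random variables distributed as x, let a be an even integer with a > k − 1 and γ_a := E‖x‖^a < ∞, and let G_n(V) = n^{-1/2}·Σ_{i=1}^n (⟨x_i, V⟩ − E⟨x, V⟩) be the empirical tangent field (taking its almost surely continuous realization). Define the modulus of continuity w(h, r) = sup{|h(V) − h(U)| : U, V ∈ S, ‖V − U‖ ≤ r}. Then there exist a finite constant C and an integer M such that for all n ≥ 1 and all m ≥ M, E[w(G_n, 2^{-m})^a] ≤ C·2^{-m·(a − (k−1))}; consequently lim_{m→∞} limsup_{n→∞} E[min(w(G_n, 2^{-m}), 1)] = 0. -/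
open MeasureTheory ProbabilityTheory Metric Filter Topology
open scoped RealInnerProductSpace NNReal

/-- The empirical tangent field
`G_n(V) = n^{-1/2} ∑_{i=1}^n (⟪xᵢ, V⟫ - E⟪x, V⟫)` induced by random variables
`x₁, x₂, …` distributed as `x₀`. -/
noncomputable def empiricalTangentField {Ω H : Type*} [MeasurableSpace Ω]
    [NormedAddCommGroup H] [InnerProductSpace ℝ H]
    (P : Measure Ω) (x : ℕ → Ω → H) (x₀ : Ω → H)
    (n : ℕ) (V : H) (ω : Ω) : ℝ :=
  (Real.sqrt n)⁻¹ * ∑ i ∈ Finset.range n, (⟪x i ω, V⟫ - ∫ ω', ⟪x₀ ω', V⟫ ∂P)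

/-- The modulus of continuity `w(h, r) = sup {|h(V) - h(U)| : dist(V, U) ≤ r}` of a
function `h` on a metric space. -/
noncomputable def modulusOfContinuity {S : Type*} [MetricSpace S] (h : S → ℝ) (r : ℝ) : ℝ :=
  sSup {t : ℝ | ∃ U V : S, dist V U ≤ r ∧ t = |h V - h U|}

/-!
`G_n(V) = ⟪Z_n, V⟫` is linear in `V`, with `Z_n = n^{-1/2} ∑_{i<n} (xᵢ - E x)`, so
`w(G_n, r) ≤ ‖Z_n‖ r` and both claims reduce to `sup_n E‖Z_n‖^a < ∞` (together with
`r^a ≤ r^{a-(k-1)}` for `r = 2^{-m} ≤ 1`, and `min(w, 1) ≤ w ≤ (1 + ‖Z_n‖^a) r`).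
Coordinatewise, this is the bound `E(∑_{i∈s} Wᵢ)^{2h} = O(#s^h)` for independent centered `Wᵢ`:
expanding the power, the term `∏ₜ W_{g t}` has mean zero as soon as some index occurs exactly
once, so only maps `g : Fin (2h) → s` with at most `h` values contribute, and there are
`O(#s^h)` of them.
-/

open Finset

section ModulusOfContinuity

variable {S : Type*} [MetricSpace S]

lemma modulusOfContinuity_nonneg (f : S → ℝ) (r : ℝ) : 0 ≤ modulusOfContinuity f r :=
  Real.sSup_nonneg fun _ ⟨_, _, _, ht⟩ => ht ▸ abs_nonneg _

lemma LipschitzWith.modulusOfContinuity_le {f : S → ℝ} {K : ℝ≥0} (hf : LipschitzWith K f)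
    {r : ℝ} (hr : 0 ≤ r) : modulusOfContinuity f r ≤ K * r :=
  Real.sSup_le (fun _ ⟨U, V, hUV, ht⟩ => ht ▸ (hf.dist_le_mul V U).trans (by gcongr))
    (by positivity)

lemma modulusOfContinuity_inner_le {E : Type*} [NormedAddCommGroup E] [InnerProductSpace ℝ E]
    (z : E) (s : Set E) {r : ℝ} (hr : 0 ≤ r) :
    modulusOfContinuity (fun V : s => ⟪z, (V : E)⟫) r ≤ ‖z‖ * r := by
  have hf : LipschitzWith ‖z‖₊ (fun V : s => ⟪z, (V : E)⟫) := by
    have h := (innerSL ℝ z).lipschitz.comp (LipschitzWith.subtype_val s)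
    rw [show ‖innerSL ℝ z‖₊ = ‖z‖₊ from NNReal.eq (innerSL_apply_norm ℝ z), mul_one] at h
    exact h
  exact hf.modulusOfContinuity_le hr

end ModulusOfContinuity

lemma pow_le_one_add_pow {t : ℝ} (ht : 0 ≤ t) {c a : ℕ} (hca : c ≤ a) : t ^ c ≤ 1 + t ^ a := by
  rcases le_total t 1 with h1 | h1
  · linarith [pow_le_one₀ ht h1 (n := c), pow_nonneg ht a]
  · linarith [pow_le_pow_right₀ h1 hca]

lemma tendsto_limsup_nhds_zero_of_le {α β : Type*} {l : Filter α} {l' : Filter β} [l'.NeBot]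
    {v : α → β → ℝ} {ε : α → ℝ} (hv₀ : ∀ m n, 0 ≤ v m n) (hv : ∀ m, ∀ᶠ n in l', v m n ≤ ε m)
    (hε : Tendsto ε l (𝓝 0)) : Tendsto (fun m => limsup (v m) l') l (𝓝 0) := by
  refine tendsto_of_tendsto_of_tendsto_of_le_of_le tendsto_const_nhds hε (fun m => ?_)
    (fun m => limsup_le_of_le (isCoboundedUnder_le_of_le l' (hv₀ m)) (hv m))
  exact le_limsup_of_frequently_le (Frequently.of_forall (hv₀ m))
    (isBoundedUnder_of_eventually_le (hv m))

section Counting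

variable {α β : Type*} [DecidableEq β]

lemma card_filter_powerset_card_le (s : Finset β) (hs : s.Nonempty) (h : ℕ) :
    #{T ∈ s.powerset | #T ≤ h} ≤ (h + 1) * #s ^ h := by
  have hsub : {T ∈ s.powerset | #T ≤ h} ⊆ (range (h + 1)).biUnion (powersetCard · s) := by
    intro T hT
    rw [mem_filter, mem_powerset] at hT
    exact mem_biUnion.2 ⟨#T, mem_range.2 (Nat.lt_succ_of_le hT.2), mem_powersetCard.2 ⟨hT.1, rfl⟩⟩
  calc #{T ∈ s.powerset | #T ≤ h}
      ≤ #((range (h + 1)).biUnion (powersetCard · s)) := card_le_card hsub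
    _ ≤ ∑ j ∈ range (h + 1), #(powersetCard j s) := card_biUnion_le
    _ ≤ ∑ _j ∈ range (h + 1), #s ^ h := sum_le_sum fun j hj => by
      rw [card_powersetCard]
      exact (Nat.choose_le_pow _ _).trans
        (Nat.pow_le_pow_right hs.card_pos (Nat.lt_succ_iff.1 (mem_range.1 hj)))
    _ = (h + 1) * #s ^ h := by rw [sum_const, card_range, smul_eq_mul]

lemma card_filter_piFinset_card_image_le [Fintype α] [DecidableEq α] (s : Finset β)
    (hs : s.Nonempty) (h : ℕ) :
    #{g ∈ Fintype.piFinset (fun _ : α => s) | #(univ.image g) ≤ h}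
      ≤ (h + 1) * #s ^ h * h ^ Fintype.card α := by
  have hsub : {g ∈ Fintype.piFinset (fun _ : α => s) | #(univ.image g) ≤ h}
      ⊆ {T ∈ s.powerset | #T ≤ h}.biUnion fun T => Fintype.piFinset fun _ : α => T := by
    intro g hg
    rw [mem_filter, Fintype.mem_piFinset] at hg
    refine mem_biUnion.2
      ⟨univ.image g, ?_, Fintype.mem_piFinset.2 fun t => mem_image_of_mem g (mem_univ t)⟩
    rw [mem_filter, mem_powerset]
    exact ⟨fun i hi => by obtain ⟨t, -, rfl⟩ := mem_image.1 hi; exact hg.1 t, hg.2⟩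
  calc _ ≤ _ := card_le_card hsub
    _ ≤ #{T ∈ s.powerset | #T ≤ h} * h ^ Fintype.card α := by
      refine card_biUnion_le_card_mul _ _ _ fun T hT => ?_
      rw [Fintype.card_piFinset, prod_const, card_univ]
      exact Nat.pow_le_pow_left (mem_filter.1 hT).2 _
    _ ≤ _ := Nat.mul_le_mul_right _ (card_filter_powerset_card_le s hs h)

lemma two_mul_card_image_le_of_fiber_ne_one [Fintype α] (g : α → β)
    (hg : ∀ b ∈ univ.image g, #{t | g t = b} ≠ 1) : 2 * #(univ.image g) ≤ Fintype.card α := by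
  rw [← card_univ, card_eq_sum_card_image g univ, mul_comm, ← smul_eq_mul, ← sum_const]
  refine sum_le_sum fun b hb => ?_
  have : 0 < #{t | g t = b} := by
    obtain ⟨t, -, rfl⟩ := mem_image.1 hb
    exact card_pos.2 ⟨t, by simp⟩
  have := hg b hb
  omega

end Counting

section Moments

variable {Ω κ : Type*} [MeasurableSpace Ω] {P : Measure Ω} {W : κ → Ω → ℝ}

lemma ProbabilityTheory.iIndepFun.integral_finset_prod (hW : iIndepFun W P)
    (hm : ∀ i, AEStronglyMeasurable (W i) P) (s : Finset κ) :
    ∫ ω, ∏ i ∈ s, W i ω ∂P = ∏ i ∈ s, ∫ ω, W i ω ∂P := by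
  have hsub := (hW.precomp (g := ((↑) : s → κ)) Subtype.val_injective
    ).integral_fun_prod_eq_prod_integral fun i => hm i
  have hcoe (ω : Ω) : ∏ i : s, W i ω = ∏ i ∈ s, W i ω := prod_coe_sort s (W · ω)
  rw [← prod_coe_sort s, ← hsub]
  simp only [hcoe]

lemma integral_prod_comp_eq_prod_integral_pow [DecidableEq κ] {α : Type*} [Fintype α]
    (hW : iIndepFun W P) (hm : ∀ i, AEStronglyMeasurable (W i) P) (g : α → κ) :
    ∫ ω, ∏ t, W (g t) ω ∂P = ∏ i ∈ univ.image g, ∫ ω, W i ω ^ #{t | g t = i} ∂P := by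
  have hfibers (ω : Ω) : ∏ t, W (g t) ω = ∏ i ∈ univ.image g, W i ω ^ #{t | g t = i} :=
    prod_comp (fun i => W i ω) g
  simp_rw [hfibers]
  exact (hW.comp (fun i y => y ^ #{t | g t = i}) fun _ => measurable_id.pow_const _
    ).integral_finset_prod (fun i => (hm i).pow _) _

variable [IsProbabilityMeasure P]

lemma MeasureTheory.MemLp.integrable_pow_of_even {f : Ω → ℝ} {p : ℕ} (hf : MemLp f p P)
    (hp : Even p) : Integrable (fun ω => f ω ^ p) P := by
  simpa only [Real.norm_eq_abs, hp.pow_abs] using hf.integrable_norm_pow'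

lemma integrable_prod_comp_of_memLp {α : Type*} [Fintype α]
    (hmem : ∀ i, MemLp (W i) (Fintype.card α) P) (g : α → κ) :
    Integrable (fun ω => ∏ t, W (g t) ω) P := by
  refine (MemLp.prod' (s := univ) (p := fun _ => (Fintype.card α : ENNReal))
    fun t _ => hmem (g t)).integrable ?_
  rw [sum_const, card_univ, nsmul_eq_mul, ENNReal.one_le_inv]
  exact ENNReal.mul_inv_le_one _

lemma abs_integral_pow_le_one_add {f : Ω → ℝ} {c a : ℕ} (hca : c ≤ a)
    (hf : Integrable (fun ω => |f ω| ^ a) P) :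
    |∫ ω, f ω ^ c ∂P| ≤ 1 + ∫ ω, |f ω| ^ a ∂P :=
  calc |∫ ω, f ω ^ c ∂P| ≤ ∫ ω, |f ω ^ c| ∂P := abs_integral_le_integral_abs
    _ ≤ ∫ ω, (1 + |f ω| ^ a) ∂P :=
      integral_mono_of_nonneg (ae_of_all _ fun _ => abs_nonneg _) ((integrable_const 1).add hf)
        (ae_of_all _ fun ω => by
          dsimp only
          rw [abs_pow]
          exact pow_le_one_add_pow (abs_nonneg _) hca)
    _ = 1 + ∫ ω, |f ω| ^ a ∂P := by
      rw [integral_add (integrable_const 1) hf, integral_const, probReal_univ, one_smul]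

variable [DecidableEq κ]

/-- A centered factor occurring exactly once kills the product; otherwise every value of `g` is
taken at least twice, so `g` takes at most `h` values. -/
lemma prod_integral_pow_fiber_le (hcent : ∀ i, ∫ ω, W i ω ∂P = 0) {h : ℕ}
    (hint : ∀ i, Integrable (fun ω => |W i ω| ^ (2 * h)) P) {B : ℝ} (hB₀ : 0 ≤ B)
    (hB : ∀ i, ∫ ω, |W i ω| ^ (2 * h) ∂P ≤ B) (g : Fin (2 * h) → κ) :
    ∏ i ∈ univ.image g, ∫ ω, W i ω ^ #{t | g t = i} ∂P
      ≤ if #(univ.image g) ≤ h then (1 + B) ^ (2 * h) else 0 := by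
  split_ifs with hsmall
  · calc _ ≤ |∏ i ∈ univ.image g, ∫ ω, W i ω ^ #{t | g t = i} ∂P| := le_abs_self _
      _ = ∏ i ∈ univ.image g, |∫ ω, W i ω ^ #{t | g t = i} ∂P| := abs_prod _ _
      _ ≤ ∏ _i ∈ univ.image g, (1 + B) := prod_le_prod (fun _ _ => abs_nonneg _) fun i _ =>
          (abs_integral_pow_le_one_add ((card_filter_le _ _).trans_eq (by simp)) (hint i)).trans
            (by linarith [hB i])
      _ = (1 + B) ^ #(univ.image g) := prod_const _
      _ ≤ (1 + B) ^ (2 * h) := pow_le_pow_right₀ (by linarith) (by omega)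
  · obtain ⟨i, hi, hone⟩ : ∃ i ∈ univ.image g, #{t | g t = i} = 1 := by
      by_contra! hne
      have := two_mul_card_image_le_of_fiber_ne_one g hne
      rw [Fintype.card_fin] at this
      omega
    refine (prod_eq_zero hi ?_).le
    rw [hone, integral_congr_ae (ae_of_all _ fun _ => pow_one _), hcent i]

theorem ProbabilityTheory.iIndepFun.integral_sum_pow_le (hW : iIndepFun W P) {h : ℕ}
    (hmem : ∀ i, MemLp (W i) (2 * h : ℕ) P) (hcent : ∀ i, ∫ ω, W i ω ∂P = 0) {B : ℝ}
    (hB : ∀ i, ∫ ω, |W i ω| ^ (2 * h) ∂P ≤ B) (s : Finset κ) (hs : s.Nonempty) :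
    ∫ ω, (∑ i ∈ s, W i ω) ^ (2 * h) ∂P
      ≤ (h + 1) * h ^ (2 * h) * (1 + B) ^ (2 * h) * #s ^ h := by
  have hint (i : κ) : Integrable (fun ω => |W i ω| ^ (2 * h)) P := by
    simpa only [Real.norm_eq_abs] using (hmem i).integrable_norm_pow'
  have hB₀ : 0 ≤ B := (integral_nonneg fun _ => by positivity).trans (hB hs.choose)
  have hexpand (ω : Ω) : (∑ i ∈ s, W i ω) ^ (2 * h)
      = ∑ g ∈ Fintype.piFinset (fun _ : Fin (2 * h) => s), ∏ t, W (g t) ω := by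
    rw [← Fin.prod_const, prod_univ_sum]
  have hprod_int (g : Fin (2 * h) → κ) : Integrable (fun ω => ∏ t, W (g t) ω) P :=
    integrable_prod_comp_of_memLp (by simpa only [Fintype.card_fin] using hmem) g
  have hcount := card_filter_piFinset_card_image_le (α := Fin (2 * h)) s hs h
  rw [Fintype.card_fin] at hcount
  calc ∫ ω, (∑ i ∈ s, W i ω) ^ (2 * h) ∂P
      = ∑ g ∈ Fintype.piFinset (fun _ : Fin (2 * h) => s), ∫ ω, ∏ t, W (g t) ω ∂P := by
        simp_rw [hexpand]
        exact integral_finsetSum _ fun g _ => hprod_int g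
    _ = ∑ g ∈ Fintype.piFinset (fun _ : Fin (2 * h) => s),
          ∏ i ∈ univ.image g, ∫ ω, W i ω ^ #{t | g t = i} ∂P :=
        sum_congr rfl fun g _ =>
          integral_prod_comp_eq_prod_integral_pow hW (fun i => (hmem i).1) g
    _ ≤ ∑ g ∈ Fintype.piFinset (fun _ : Fin (2 * h) => s),
          if #(univ.image g) ≤ h then (1 + B) ^ (2 * h) else 0 :=
        sum_le_sum fun g _ => prod_integral_pow_fiber_le hcent hint hB₀ hB g
    _ = #{g ∈ Fintype.piFinset (fun _ : Fin (2 * h) => s) | #(univ.image g) ≤ h}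
          * (1 + B) ^ (2 * h) := by
        rw [← sum_filter, sum_const, nsmul_eq_mul]
    _ ≤ ((h + 1) * #s ^ h * h ^ (2 * h) : ℕ) * (1 + B) ^ (2 * h) := by
        gcongr
    _ = (h + 1) * h ^ (2 * h) * (1 + B) ^ (2 * h) * #s ^ h := by
        push_cast
        ring

theorem ProbabilityTheory.iIndepFun.integral_norm_sum_pow_le {ι : Type*} [Fintype ι]
    {Y : κ → Ω → EuclideanSpace ℝ ι} (hY : iIndepFun Y P) {h : ℕ} (hh : h ≠ 0)
    (hmem : ∀ i, MemLp (Y i) (2 * h : ℕ) P) (hcent : ∀ i, ∫ ω, Y i ω ∂P = 0) {B : ℝ}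
    (hB : ∀ i, ∫ ω, ‖Y i ω‖ ^ (2 * h) ∂P ≤ B) (s : Finset κ) (hs : s.Nonempty) :
    ∫ ω, ‖∑ i ∈ s, Y i ω‖ ^ (2 * h) ∂P
      ≤ Fintype.card ι ^ h * ((h + 1) * h ^ (2 * h) * (1 + B) ^ (2 * h)) * #s ^ h := by
  set K : ℝ := (h + 1) * h ^ (2 * h) * (1 + B) ^ (2 * h)
  have hcoord_mem (i : κ) (j : ι) : MemLp (fun ω => Y i ω j) (2 * h : ℕ) P :=
    (EuclideanSpace.proj (𝕜 := ℝ) j).comp_memLp' (hmem i)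
  have hcoord (j : ι) : ∫ ω, (∑ i ∈ s, Y i ω j) ^ (2 * h) ∂P ≤ K * #s ^ h := by
    refine (hY.comp (fun _ v => v j) fun _ => by fun_prop).integral_sum_pow_le
      (hcoord_mem · j) (fun i => ?_) (fun i => ?_) s hs
    · have hint : Integrable (Y i) P := (hmem i).integrable (by norm_cast; omega)
      change ∫ ω, EuclideanSpace.proj (𝕜 := ℝ) j (Y i ω) ∂P = 0
      rw [(EuclideanSpace.proj j).integral_comp_comm hint, hcent i, map_zero]
    · refine (integral_mono_of_nonneg (ae_of_all _ fun _ => by positivity)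
        (hmem i).integrable_norm_pow' (ae_of_all _ fun ω => ?_)).trans (hB i)
      dsimp only
      gcongr
      exact PiLp.norm_apply_le (Y i ω) j
  have hpt (ω : Ω) : ‖∑ i ∈ s, Y i ω‖ ^ (2 * h)
      ≤ Fintype.card ι ^ (h - 1) * ∑ j, (∑ i ∈ s, Y i ω j) ^ (2 * h) := by
    have hjensen := pow_sum_le_card_mul_sum_pow (s := univ)
      (f := fun j => (∑ i ∈ s, Y i ω) j ^ 2) (fun _ _ => sq_nonneg _) (h - 1)
    rw [Nat.sub_add_cancel (Nat.one_le_iff_ne_zero.2 hh), card_univ] at hjensen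
    simpa only [pow_mul, EuclideanSpace.real_norm_sq_eq, WithLp.ofLp_sum, Finset.sum_apply]
      using hjensen
  have hdom_int : Integrable
      (fun ω => Fintype.card ι ^ (h - 1) * ∑ j, (∑ i ∈ s, Y i ω j) ^ (2 * h)) P :=
    (integrable_finsetSum _ fun j _ =>
      (memLp_finsetSum s fun i _ => hcoord_mem i j).integrable_pow_of_even (even_two_mul h)
      ).const_mul _
  calc ∫ ω, ‖∑ i ∈ s, Y i ω‖ ^ (2 * h) ∂P
      ≤ ∫ ω, Fintype.card ι ^ (h - 1) * ∑ j, (∑ i ∈ s, Y i ω j) ^ (2 * h) ∂P :=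
        integral_mono_of_nonneg (ae_of_all _ fun _ => by positivity) hdom_int (ae_of_all _ hpt)
    _ = Fintype.card ι ^ (h - 1) * ∑ j, ∫ ω, (∑ i ∈ s, Y i ω j) ^ (2 * h) ∂P := by
        rw [integral_const_mul, integral_finsetSum _ fun j _ =>
          (memLp_finsetSum s fun i _ => hcoord_mem i j).integrable_pow_of_even (even_two_mul h)]
    _ ≤ Fintype.card ι ^ (h - 1) * ∑ _j : ι, K * #s ^ h := by gcongr with j; exact hcoord j
    _ = Fintype.card ι ^ h * K * #s ^ h := by
        rw [sum_const, card_univ, nsmul_eq_mul, ← mul_assoc, ← mul_assoc, ← pow_succ,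
          Nat.sub_add_cancel (Nat.one_le_iff_ne_zero.2 hh)]

end Moments

section NormalizedCenteredSum

variable {Ω H : Type*} [MeasurableSpace Ω] [NormedAddCommGroup H] [InnerProductSpace ℝ H]
  {P : Measure Ω} {x : ℕ → Ω → H} {x₀ : Ω → H}

noncomputable def normalizedCenteredSum (P : Measure Ω) (x : ℕ → Ω → H) (x₀ : Ω → H) (n : ℕ)
    (ω : Ω) : H :=
  (Real.sqrt n)⁻¹ • ∑ i ∈ range n, (x i ω - ∫ ω', x₀ ω' ∂P)

lemma empiricalTangentField_eq_inner [CompleteSpace H] (hx₀ : Integrable x₀ P) (n : ℕ) (V : H)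
    (ω : Ω) : empiricalTangentField P x x₀ n V ω = ⟪normalizedCenteredSum P x x₀ n ω, V⟫ := by
  have hmean : ∫ ω', ⟪x₀ ω', V⟫ ∂P = ⟪∫ ω', x₀ ω' ∂P, V⟫ := by
    simpa only [real_inner_comm V] using integral_inner hx₀ V
  simp only [empiricalTangentField, normalizedCenteredSum, real_inner_smul_left, sum_inner,
    inner_sub_left, hmean]

lemma modulusOfContinuity_empiricalTangentField_le [CompleteSpace H] (hx₀ : Integrable x₀ P)
    (s : Set H) (n : ℕ) (ω : Ω) {r : ℝ} (hr : 0 ≤ r) :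
    modulusOfContinuity (fun V : s => empiricalTangentField P x x₀ n V ω) r
      ≤ ‖normalizedCenteredSum P x x₀ n ω‖ * r := by
  simpa only [empiricalTangentField_eq_inner hx₀] using modulusOfContinuity_inner_le _ s hr

lemma norm_normalizedCenteredSum_pow (n h : ℕ) (ω : Ω) :
    ‖normalizedCenteredSum P x x₀ n ω‖ ^ (2 * h) =
      ((n : ℝ) ^ h)⁻¹ * ‖∑ i ∈ range n, (x i ω - ∫ ω', x₀ ω' ∂P)‖ ^ (2 * h) := by
  rw [normalizedCenteredSum, norm_smul, mul_pow, norm_inv,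
    Real.norm_of_nonneg (Real.sqrt_nonneg _), pow_mul, inv_pow, Real.sq_sqrt n.cast_nonneg, inv_pow]

end NormalizedCenteredSum

section IID

variable {Ω ι : Type*} [MeasurableSpace Ω] {P : Measure Ω} [IsProbabilityMeasure P] [Fintype ι]
  {x : ℕ → Ω → EuclideanSpace ℝ ι} {x₀ : Ω → EuclideanSpace ℝ ι}

lemma memLp_normalizedCenteredSum {p : ENNReal} (hid : ∀ i, IdentDistrib (x i) x₀ P P)
    (hmem : MemLp x₀ p P) (n : ℕ) : MemLp (normalizedCenteredSum P x x₀ n) p P :=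
  (memLp_finsetSum (range n) fun i _ =>
    ((hid i).memLp_iff.2 hmem).sub (memLp_const (∫ ω, x₀ ω ∂P))).const_smul (Real.sqrt n)⁻¹

lemma integral_norm_normalizedCenteredSum_pow_le (hindep : iIndepFun x P)
    (hid : ∀ i, IdentDistrib (x i) x₀ P P) {h : ℕ} (hh : h ≠ 0) (hmem : MemLp x₀ (2 * h : ℕ) P)
    {n : ℕ} (hn : n ≠ 0) :
    ∫ ω, ‖normalizedCenteredSum P x x₀ n ω‖ ^ (2 * h) ∂P ≤ Fintype.card ι ^ h *
      ((h + 1) * h ^ (2 * h) * (1 + ∫ ω, ‖x₀ ω - ∫ ω', x₀ ω' ∂P‖ ^ (2 * h) ∂P) ^ (2 * h)) := by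
  set μ := ∫ ω, x₀ ω ∂P
  have hint (i : ℕ) : Integrable (x i) P :=
    ((hid i).memLp_iff.2 hmem).integrable (by norm_cast; omega)
  have hcent (i : ℕ) : ∫ ω, (x i ω - μ) ∂P = 0 := by
    rw [integral_sub (hint i) (integrable_const μ), (hid i).integral_eq, integral_const,
      probReal_univ, one_smul, sub_self]
  have hmom (i : ℕ) : ∫ ω, ‖x i ω - μ‖ ^ (2 * h) ∂P = ∫ ω, ‖x₀ ω - μ‖ ^ (2 * h) ∂P :=
    ((hid i).comp (by fun_prop : Measurable fun v => ‖v - μ‖ ^ (2 * h))).integral_eq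
  have hsum := (hindep.comp (fun _ v => v - μ) fun _ => by fun_prop).integral_norm_sum_pow_le hh
    (fun i => ((hid i).memLp_iff.2 hmem).sub (memLp_const μ)) hcent (fun i => (hmom i).le)
    (range n) (nonempty_range_iff.2 hn)
  simp_rw [norm_normalizedCenteredSum_pow, integral_const_mul]
  refine (mul_le_mul_of_nonneg_left hsum (by positivity)).trans_eq ?_
  rw [card_range]
  field_simp

end IID

section DominatedByNorm

variable {Ω E : Type*} [MeasurableSpace Ω] {P : Measure Ω} [NormedAddCommGroup E]
  {w : Ω → ℝ} {Z : Ω → E} {r : ℝ}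

lemma integral_pow_le_of_le_norm_mul (hw₀ : ∀ ω, 0 ≤ w ω)
    (hw : ∀ ω, w ω ≤ ‖Z ω‖ * r) {p : ℕ} (hZ : Integrable (fun ω => ‖Z ω‖ ^ p) P) :
    ∫ ω, w ω ^ p ∂P ≤ (∫ ω, ‖Z ω‖ ^ p ∂P) * r ^ p := by
  rw [← integral_mul_const]
  refine integral_mono_of_nonneg (ae_of_all _ fun ω => pow_nonneg (hw₀ ω) p) (hZ.mul_const _)
    (ae_of_all _ fun ω => ?_)
  dsimp only
  rw [← mul_pow]
  exact pow_le_pow_left₀ (hw₀ ω) (hw ω) p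

lemma integral_min_one_le_of_le_norm_mul [IsProbabilityMeasure P] (hr : 0 ≤ r)
    (hw₀ : ∀ ω, 0 ≤ w ω) (hw : ∀ ω, w ω ≤ ‖Z ω‖ * r) {p : ℕ} (hp : p ≠ 0)
    (hZ : Integrable (fun ω => ‖Z ω‖ ^ p) P) :
    ∫ ω, min (w ω) 1 ∂P ≤ (1 + ∫ ω, ‖Z ω‖ ^ p ∂P) * r := by
  have hpt (ω : Ω) : min (w ω) 1 ≤ (1 + ‖Z ω‖ ^ p) * r := by
    refine (min_le_left _ _).trans ((hw ω).trans (mul_le_mul_of_nonneg_right ?_ hr))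
    simpa only [pow_one] using
      pow_le_one_add_pow (norm_nonneg (Z ω)) (Nat.one_le_iff_ne_zero.2 hp)
  calc ∫ ω, min (w ω) 1 ∂P ≤ ∫ ω, (1 + ‖Z ω‖ ^ p) * r ∂P :=
        integral_mono_of_nonneg (ae_of_all _ fun ω => le_min (hw₀ ω) zero_le_one)
          (((integrable_const 1).add hZ).mul_const r) (ae_of_all _ hpt)
    _ = (1 + ∫ ω, ‖Z ω‖ ^ p ∂P) * r := by
        rw [integral_mul_const, integral_add (integrable_const 1) hZ, integral_const,
          probReal_univ, one_smul]

end DominatedByNorm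

lemma two_rpow_neg_pow_le (m a : ℕ) {c : ℝ} (hc : 0 ≤ c) :
    ((2 : ℝ) ^ (-(m : ℝ))) ^ a ≤ 2 ^ (-(m : ℝ) * (a - c)) := by
  rw [← Real.rpow_natCast, ← Real.rpow_mul zero_le_two]
  exact Real.rpow_le_rpow_of_exponent_le one_le_two
    (by nlinarith [(m.cast_nonneg : (0 : ℝ) ≤ m)])

theorem empiricalTangentField_modulus_bound_general
    (k : ℕ) (hk : 2 ≤ k)
    {Ω : Type*} [MeasurableSpace Ω] (P : Measure Ω) [IsProbabilityMeasure P]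
    (x : ℕ → Ω → EuclideanSpace ℝ (Fin k)) (x₀ : Ω → EuclideanSpace ℝ (Fin k))
    (hx₀ : Measurable x₀)
    (hindep : iIndepFun x P)
    (hid : ∀ i, IdentDistrib (x i) x₀ P P)
    (a : ℕ) (ha : Even a) (hak : (k : ℝ) - 1 < (a : ℝ))
    (hmom : Integrable (fun ω => ‖x₀ ω‖ ^ a) P) :
    (∃ C : ℝ, ∃ M : ℕ, ∀ n : ℕ, 1 ≤ n → ∀ m : ℕ, M ≤ m →
      (∫ ω, (modulusOfContinuity
          (fun V : sphere (0 : EuclideanSpace ℝ (Fin k)) 1 =>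
            empiricalTangentField P x x₀ n (V : EuclideanSpace ℝ (Fin k)) ω)
          ((2 : ℝ) ^ (-(m : ℝ)))) ^ a ∂P)
        ≤ C * (2 : ℝ) ^ (-(m : ℝ) * ((a : ℝ) - ((k : ℝ) - 1)))) ∧
    Tendsto
      (fun m : ℕ => atTop.limsup
        (fun n : ℕ =>
          ∫ ω, min (modulusOfContinuity
            (fun V : sphere (0 : EuclideanSpace ℝ (Fin k)) 1 =>
              empiricalTangentField P x x₀ n (V : EuclideanSpace ℝ (Fin k)) ω)
            ((2 : ℝ) ^ (-(m : ℝ)))) 1 ∂P))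
      atTop (𝓝 0) := by
  obtain ⟨h, rfl⟩ := ha.two_dvd
  have hk' : (2 : ℝ) ≤ k := by exact_mod_cast hk
  have hh : h ≠ 0 := by rintro rfl; norm_num at hak; linarith
  have hmem : MemLp x₀ (2 * h : ℕ) P := by
    rw [← integrable_norm_rpow_iff hx₀.aestronglyMeasurable (by simpa using hh)
      (ENNReal.natCast_ne_top _), ENNReal.toReal_natCast]
    simpa only [Real.rpow_natCast] using hmom
  obtain ⟨C, hC⟩ : ∃ C, ∀ n, 1 ≤ n → ∫ ω, ‖normalizedCenteredSum P x x₀ n ω‖ ^ (2 * h) ∂P ≤ C :=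
    ⟨_, fun n hn => integral_norm_normalizedCenteredSum_pow_le hindep hid hh hmem (by omega)⟩
  have hZ (n : ℕ) := (memLp_normalizedCenteredSum hid hmem n).integrable_norm_pow'
  have hr (m : ℕ) : (0 : ℝ) ≤ 2 ^ (-(m : ℝ)) := by positivity
  have hw (n m : ℕ) (ω : Ω) := modulusOfContinuity_empiricalTangentField_le (x := x)
    (hmem.integrable (by norm_cast; omega)) (sphere 0 1) n ω (hr m)
  refine ⟨⟨C, 0, fun n hn m _ => ?_⟩, ?_⟩
  · refine (integral_pow_le_of_le_norm_mul (fun ω => modulusOfContinuity_nonneg _ _)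
      (hw n m) (hZ n)).trans (mul_le_mul (hC n hn) ?_ (by positivity) ?_)
    · exact two_rpow_neg_pow_le m _ (by linarith)
    · exact (integral_nonneg fun ω => by positivity).trans (hC 1 le_rfl)
  · refine tendsto_limsup_nhds_zero_of_le (ε := fun m : ℕ => (1 + C) * 2 ^ (-(m : ℝ)))
      (fun m n => integral_nonneg fun ω => le_min (modulusOfContinuity_nonneg _ _) zero_le_one)
      (fun m => eventually_atTop.2 ⟨1, fun n hn =>
        (integral_min_one_le_of_le_norm_mul (hr m) (fun ω => modulusOfContinuity_nonneg _ _)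
          (hw n m) (by omega) (hZ n)).trans (by gcongr; exact hC n hn)⟩) ?_
    simpa using ((tendsto_rpow_atBot_of_base_gt_one 2 one_lt_two).comp
      (tendsto_neg_atTop_atBot.comp tendsto_natCast_atTop_atTop)).const_mul (1 + C)

/-- Modulus-of-continuity estimate for the empirical tangent field on the unit sphere
`S^{k-1}`: for an even integer `a > k - 1` with `E‖x‖^a < ∞`, there are a finite
constant `C` and an integer `M` with `E[w(G_n, 2^{-m})^a] ≤ C 2^{-m(a-(k-1))}` for all
`n ≥ 1` and `m ≥ M`; consequently
`lim_{m→∞} limsup_{n→∞} E[min(w(G_n, 2^{-m}), 1)] = 0`. -/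
theorem empiricalTangentField_modulus_bound
    (k : ℕ) (hk : 2 ≤ k)
    {Ω : Type*} [MeasurableSpace Ω] (P : Measure Ω) [IsProbabilityMeasure P]
    (x : ℕ → Ω → EuclideanSpace ℝ (Fin k)) (x₀ : Ω → EuclideanSpace ℝ (Fin k))
    (hx₀ : Measurable x₀) (hx : ∀ i, Measurable (x i))
    (hindep : iIndepFun x P)
    (hid : ∀ i, IdentDistrib (x i) x₀ P P)
    (a : ℕ) (ha : Even a) (hak : (k : ℝ) - 1 < (a : ℝ))
    (hmom : Integrable (fun ω => ‖x₀ ω‖ ^ a) P) :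
    (∃ C : ℝ, ∃ M : ℕ, ∀ n : ℕ, 1 ≤ n → ∀ m : ℕ, M ≤ m →
      (∫ ω, (modulusOfContinuity
          (fun V : sphere (0 : EuclideanSpace ℝ (Fin k)) 1 =>
            empiricalTangentField P x x₀ n (V : EuclideanSpace ℝ (Fin k)) ω)
          ((2 : ℝ) ^ (-(m : ℝ)))) ^ a ∂P)
        ≤ C * (2 : ℝ) ^ (-(m : ℝ) * ((a : ℝ) - ((k : ℝ) - 1)))) ∧
    Tendsto
      (fun m : ℕ => atTop.limsup
        (fun n : ℕ =>
          ∫ ω, min (modulusOfContinuity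
            (fun V : sphere (0 : EuclideanSpace ℝ (Fin k)) 1 =>
              empiricalTangentField P x x₀ n (V : EuclideanSpace ℝ (Fin k)) ω)
            ((2 : ℝ) ^ (-(m : ℝ)))) 1 ∂P))
      atTop (𝓝 0) :=
  empiricalTangentField_modulus_bound_general k hk P x x₀ hx₀ hindep hid a ha hak hmom
end
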